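/- arXiv:2007.00028 — 2 statements merged into one kernel-verified Lean document; each statement's English description precedes it below -/
import Mathlib

section
/- Let x_1,…,x_m ∈ ℝ^d satisfy max_i ‖x_i‖ ≤ 1 and be separable with margin γ ∈ (0,1], let ℓ be the logistic loss, and consider stochastic gradient descent with step size 1: i_1, i_2, … i.i.d. uniform on {1,…,m}, w_1 = 0, w_{t+1} = w_t − ℓ'(x_{i_t}ᵀw_t)·x_{i_t}, and averaged iterate v_T = (1/T)Σ_{t=1}^T w_t. Then for any T > 1/γ², the expected empirical risk satisfies E[L̂(v_T)] ≤ (4/(3γ²T))·(1 + (1/2)log²(γ²T)), where the expectation is over the random indices i_1,…,i_{T}. -/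
/-!
By Jensen's inequality for the convex empirical risk, it suffices to bound the average expected
risk of the iterates `w_1, …, w_T`. The iterate `w_{s+1}` is independent of the index drawn at the
following step, so its expected risk equals the expected loss on that fresh sample, and the sum of
these losses is bounded path by path by the regret of online gradient descent:
`(3/4) ∑ ℓ(⟪x_{i_s}, w_s⟫) ≤ ∑ ℓ(⟪x_{i_s}, u⟫) + ‖u‖²/2`, which follows from the convexity of `ℓ`
and the self-bounding property `ℓ'² ≤ ℓ/2`. The comparator `u = (log(γ²T)/γ) • w₀` has every loss
`ℓ(⟪x_i, u⟫) ≤ exp(-log(γ²T)) = 1/(γ²T)` and `‖u‖² = log²(γ²T)/γ²`.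
-/

open scoped RealInnerProductSpace
open Finset Real

theorem ConvexOn.add_mul_sub_le_of_hasDerivAt {f : ℝ → ℝ} {f' a : ℝ}
    (hf : ConvexOn ℝ Set.univ f) (ha : HasDerivAt f f' a) (b : ℝ) :
    f a + f' * (b - a) ≤ f b := by
  rcases lt_trichotomy a b with hab | rfl | hab
  · have := hf.le_slope_of_hasDerivAt trivial trivial hab ha
    rw [slope_def_field, le_div_iff₀ (sub_pos.2 hab)] at this
    linarith
  · simp
  · have := hf.slope_le_of_hasDerivAt trivial trivial hab ha
    rw [slope_def_field, div_le_iff₀ (sub_pos.2 hab)] at this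
    linarith

theorem ConvexOn.map_smul_sum_range_le {E : Type*} [AddCommGroup E] [Module ℝ E] {g : E → ℝ}
    (hg : ConvexOn ℝ Set.univ g) {n : ℕ} (hn : 0 < n) (p : ℕ → E) :
    g ((n : ℝ)⁻¹ • ∑ s ∈ range n, p s) ≤ (n : ℝ)⁻¹ * ∑ s ∈ range n, g (p s) := by
  rw [smul_sum, mul_sum]
  refine hg.map_sum_le (fun _ _ => by positivity) ?_ fun _ _ => trivial
  rw [sum_const, card_range, nsmul_eq_mul, mul_inv_cancel₀ (by positivity)]

theorem Fintype.sum_sum_update {α β M : Type*} [DecidableEq α] [Fintype α] [Fintype β]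
    [AddCommMonoid M] (k : α) (G : (α → β) → M) :
    ∑ σ, ∑ b, G (Function.update σ k b) = Fintype.card β • ∑ σ, G σ := by
  let e := Equiv.funSplitAt k β
  have hupdate : ∀ a b r, Function.update (e.symm (a, r)) k b = e.symm (b, r) := by
    intro a b r
    ext j
    by_cases hj : j = k
    · subst hj; simp [e]
    · simp [e, hj]
  rw [← e.symm.sum_comp, ← e.symm.sum_comp, Fintype.sum_prod_type, Fintype.sum_prod_type]
  simp only [hupdate, sum_const, card_univ, smul_sum]
  exact sum_comm

section Logistic

noncomputable def logisticLoss (z : ℝ) : ℝ := log (1 + exp (-z))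

theorem hasDerivAt_logisticLoss (z : ℝ) : HasDerivAt logisticLoss (-sigmoid (-z)) z := by
  have h : HasDerivAt logisticLoss (exp (-z) * -1 / (1 + exp (-z))) z :=
    ((hasDerivAt_neg z).exp.const_add 1).log (by positivity)
  refine h.congr_deriv ?_
  rw [sigmoid_def, neg_neg, exp_neg]
  field_simp
  ring

theorem convexOn_logisticLoss : ConvexOn ℝ Set.univ logisticLoss := by
  refine Monotone.convexOn_univ_of_deriv (fun z => (hasDerivAt_logisticLoss z).differentiableAt) ?_
  intro a b hab
  simp only [fun z => (hasDerivAt_logisticLoss z).deriv, neg_le_neg_iff]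
  exact sigmoid_monotone (neg_le_neg hab)

theorem logisticLoss_antitone : Antitone logisticLoss := fun a b hab => by
  unfold logisticLoss
  gcongr

theorem logisticLoss_le_exp_neg (z : ℝ) : logisticLoss z ≤ exp (-z) := by
  have := log_le_sub_one_of_pos (by positivity : 0 < 1 + exp (-z))
  unfold logisticLoss
  linarith

theorem sigmoid_neg_sq_le_logisticLoss (z : ℝ) : sigmoid (-z) ^ 2 ≤ logisticLoss z / 2 := by
  set u := exp (-z) with hu
  have hu0 : 0 < u := exp_pos _
  have hsig : sigmoid (-z) = u / (1 + u) := by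
    rw [sigmoid_def, neg_neg, hu, exp_neg]
    field_simp
    ring
  have hlog := le_log_one_add_of_nonneg hu0.le
  rw [mul_div_assoc] at hlog
  rw [hsig, logisticLoss, ← hu]
  calc (u / (1 + u)) ^ 2 ≤ u / (u + 2) := by
        rw [div_pow, div_le_div_iff₀ (by positivity) (by positivity)]
        nlinarith
    _ ≤ log (1 + u) / 2 := by linarith

end Logistic

section GradientDescent

variable {E : Type*} [NormedAddCommGroup E] [InnerProductSpace ℝ E]

noncomputable def onlineGradDescent (f' : ℝ → ℝ) (y : ℕ → E) : ℕ → E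
  | 0 => 0
  | s + 1 => onlineGradDescent f' y s - f' ⟪y s, onlineGradDescent f' y s⟫ • y s

theorem onlineGradDescent_congr (f' : ℝ → ℝ) {y y' : ℕ → E} {s : ℕ}
    (h : ∀ r < s, y r = y' r) : onlineGradDescent f' y s = onlineGradDescent f' y' s := by
  induction s with
  | zero => rfl
  | succ s ih =>
    rw [onlineGradDescent, onlineGradDescent, ih fun r hr => h r (by omega), h s (by omega)]

theorem gradStep_regret {f f' : ℝ → ℝ} (hf : ConvexOn ℝ Set.univ f)
    (hf' : ∀ z, HasDerivAt f (f' z) z) (hself : ∀ z, f' z ^ 2 ≤ f z / 2)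
    {a : E} (ha : ‖a‖ ≤ 1) (w u : E) :
    3 / 4 * f ⟪a, w⟫ ≤ f ⟪a, u⟫ + (‖w - u‖ ^ 2 - ‖w - f' ⟪a, w⟫ • a - u‖ ^ 2) / 2 := by
  set c := f' ⟪a, w⟫
  have hexpand : ‖w - c • a - u‖ ^ 2 = ‖w - u‖ ^ 2 - 2 * (c * ⟪a, w - u⟫) + c ^ 2 * ‖a‖ ^ 2 := by
    rw [sub_right_comm, norm_sub_sq_real, real_inner_smul_right, norm_smul, mul_pow,
      Real.norm_eq_abs, sq_abs, real_inner_comm]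
  have htangent : f ⟪a, w⟫ + c * (⟪a, u⟫ - ⟪a, w⟫) ≤ f ⟪a, u⟫ :=
    hf.add_mul_sub_le_of_hasDerivAt (hf' _) _
  have hgrad : c ^ 2 * ‖a‖ ^ 2 ≤ f ⟪a, w⟫ / 2 :=
    (mul_le_of_le_one_right (sq_nonneg c) (pow_le_one₀ (norm_nonneg a) ha)).trans (hself _)
  rw [hexpand, inner_sub_right]
  linarith

theorem onlineGradDescent_regret {f f' : ℝ → ℝ} (hf : ConvexOn ℝ Set.univ f)
    (hf' : ∀ z, HasDerivAt f (f' z) z) (hself : ∀ z, f' z ^ 2 ≤ f z / 2)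
    {y : ℕ → E} (hy : ∀ s, ‖y s‖ ≤ 1) (u : E) (n : ℕ) :
    3 / 4 * ∑ s ∈ range n, f ⟪y s, onlineGradDescent f' y s⟫ ≤
      ∑ s ∈ range n, f ⟪y s, u⟫ + ‖u‖ ^ 2 / 2 := by
  set w := onlineGradDescent f' y
  have hstep : ∀ s ∈ range n, 3 / 4 * f ⟪y s, w s⟫ ≤
      f ⟪y s, u⟫ + (‖w s - u‖ ^ 2 - ‖w (s + 1) - u‖ ^ 2) / 2 :=
    fun s _ => gradStep_regret hf hf' hself (hy s) (w s) u
  have htelescope := sum_le_sum hstep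
  rw [← mul_sum, sum_add_distrib, ← sum_div, sum_range_sub' (fun s => ‖w s - u‖ ^ 2)] at htelescope
  have hw0 : ‖w 0 - u‖ = ‖u‖ := by simp [w, onlineGradDescent]
  rw [hw0] at htelescope
  linarith [sq_nonneg ‖w n - u‖]

theorem sum_logisticLoss_onlineGradDescent_le {y : ℕ → E} (hy : ∀ s, ‖y s‖ ≤ 1)
    {w₀ : E} (hw₀ : ‖w₀‖ = 1) {γ : ℝ} (hγ : 0 < γ) (hsep : ∀ s, γ ≤ ⟪y s, w₀⟫)
    {c : ℝ} (hc : 0 ≤ c) (n : ℕ) :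
    ∑ s ∈ range n, logisticLoss ⟪y s, onlineGradDescent (fun z => -sigmoid (-z)) y s⟫ ≤
      4 / 3 * (n * exp (-c) + c ^ 2 / (2 * γ ^ 2)) := by
  set u := (c / γ) • w₀
  have hu : ‖u‖ ^ 2 = c ^ 2 / γ ^ 2 := by
    rw [norm_smul, hw₀, mul_one, Real.norm_eq_abs, sq_abs, div_pow]
  have hloss : ∀ s, logisticLoss ⟪y s, u⟫ ≤ exp (-c) := fun s => by
    have : c ≤ ⟪y s, u⟫ := by
      rw [real_inner_smul_right, div_mul_eq_mul_div, le_div_iff₀ hγ]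
      exact mul_le_mul_of_nonneg_left (hsep s) hc
    exact (logisticLoss_antitone this).trans (logisticLoss_le_exp_neg c)
  have hregret := onlineGradDescent_regret convexOn_logisticLoss hasDerivAt_logisticLoss
    (fun z => by rw [neg_sq]; exact sigmoid_neg_sq_le_logisticLoss z) hy u n
  have hcomp : ∑ s ∈ range n, logisticLoss ⟪y s, u⟫ ≤ n * exp (-c) := by
    simpa using sum_le_sum fun s (_ : s ∈ range n) => hloss s
  rw [hu] at hregret
  have : c ^ 2 / γ ^ 2 / 2 = c ^ 2 / (2 * γ ^ 2) := by ring
  linarith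

end GradientDescent

section SGD

variable {E : Type*} [NormedAddCommGroup E] [InnerProductSpace ℝ E] {m T : ℕ} [NeZero T]

/-- The step from the `s`-th iterate uses the index `ι (s + 1 mod T)`. For `s + 1 < T` this is the
update of the statement; the index `ι 0`, never used by the iterates, is the fresh sample that the
last iterate `w_T` is tested on. -/
noncomputable def cyclicSamples (x : Fin m → E) (ι : Fin T → Fin m) (r : ℕ) : E :=
  x (ι (Fin.ofNat T (r + 1)))

theorem Fin.ofNat_succ_ne_ofNat_succ {r s : ℕ} (hrs : r < s) (hs : s < T) :
    Fin.ofNat T (r + 1) ≠ Fin.ofNat T (s + 1) := by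
  rw [Ne, Fin.ext_iff, Fin.val_ofNat, Fin.val_ofNat, Nat.mod_eq_of_lt (by omega)]
  rcases (Nat.add_one_le_of_lt hs).lt_or_eq with h | h
  · rw [Nat.mod_eq_of_lt h]; omega
  · rw [h, Nat.mod_self]; omega

theorem onlineGradDescent_cyclicSamples_update (f' : ℝ → ℝ) (x : Fin m → E)
    (ι : Fin T → Fin m) {s : ℕ} (hs : s < T) (j : Fin m) :
    onlineGradDescent f' (cyclicSamples x (Function.update ι (Fin.ofNat T (s + 1)) j)) s =
      onlineGradDescent f' (cyclicSamples x ι) s :=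
  onlineGradDescent_congr f' fun r hr => by
    rw [cyclicSamples, cyclicSamples,
      Function.update_of_ne (Fin.ofNat_succ_ne_ofNat_succ hr hs)]

theorem sum_sum_onlineGradDescent_cyclicSamples {M : Type*} [AddCommMonoid M]
    (F : E → E → M) (f' : ℝ → ℝ) (x : Fin m → E) {s : ℕ} (hs : s < T) :
    ∑ ι : Fin T → Fin m, ∑ i, F (x i) (onlineGradDescent f' (cyclicSamples x ι) s) =
      m • ∑ ι : Fin T → Fin m,
        F (cyclicSamples x ι s) (onlineGradDescent f' (cyclicSamples x ι) s) := by
  have := Fintype.sum_sum_update (Fin.ofNat T (s + 1))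
    fun ι : Fin T → Fin m => F (cyclicSamples x ι s) (onlineGradDescent f' (cyclicSamples x ι) s)
  simpa only [onlineGradDescent_cyclicSamples_update f' x _ hs, cyclicSamples,
    Function.update_self, Fintype.card_fin] using this

theorem eq_onlineGradDescent_cyclicSamples (f' : ℝ → ℝ) (x : Fin m → E) (ι : Fin T → Fin m)
    {w : ℕ → E} (hw1 : w 1 = 0)
    (hwrec : ∀ t : Fin T, 1 ≤ (t : ℕ) →
      w ((t : ℕ) + 1) = w (t : ℕ) - f' ⟪x (ι t), w (t : ℕ)⟫ • x (ι t))
    {s : ℕ} (hs : s < T) : w (s + 1) = onlineGradDescent f' (cyclicSamples x ι) s := by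
  induction s with
  | zero => exact hw1
  | succ s ih =>
    have hcast : Fin.ofNat T (s + 1) = ⟨s + 1, hs⟩ := Fin.ext (Nat.mod_eq_of_lt hs)
    rw [hwrec ⟨s + 1, hs⟩ (by simp), onlineGradDescent, ← ih (by omega), cyclicSamples, hcast]

theorem sum_Icc_eq_sum_range_onlineGradDescent (f' : ℝ → ℝ) (x : Fin m → E)
    (ι : Fin T → Fin m) {w : ℕ → E} (hw1 : w 1 = 0)
    (hwrec : ∀ t : Fin T, 1 ≤ (t : ℕ) →
      w ((t : ℕ) + 1) = w (t : ℕ) - f' ⟪x (ι t), w (t : ℕ)⟫ • x (ι t)) :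
    ∑ t ∈ Icc 1 T, w t = ∑ s ∈ range T, onlineGradDescent f' (cyclicSamples x ι) s := by
  rw [← Ico_add_one_right_eq_Icc, sum_Ico_eq_sum_range, add_tsub_cancel_right]
  exact sum_congr rfl fun s hs => by
    rw [add_comm, eq_onlineGradDescent_cyclicSamples f' x ι hw1 hwrec (mem_range.1 hs)]

noncomputable def empiricalRisk (f : ℝ → ℝ) (x : Fin m → E) (v : E) : ℝ :=
  1 / m * ∑ i, f ⟪x i, v⟫

theorem convexOn_empiricalRisk {f : ℝ → ℝ} (hf : ConvexOn ℝ Set.univ f) (x : Fin m → E) :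
    ConvexOn ℝ Set.univ (empiricalRisk f x) := by
  have hsum := sum_induction (s := univ) (fun i v => f ⟪x i, v⟫) (ConvexOn ℝ Set.univ)
    (fun _ _ => ConvexOn.add) (convexOn_const 0 convex_univ)
    fun i _ => hf.comp_linearMap (innerₛₗ ℝ (x i))
  unfold empiricalRisk
  simpa only [Finset.sum_apply, smul_eq_mul] using hsum.smul (by positivity : (0 : ℝ) ≤ 1 / m)

theorem sum_sum_empiricalRisk_onlineGradDescent (hm : 0 < m) (f f' : ℝ → ℝ)
    (x : Fin m → E) :
    ∑ ι : Fin T → Fin m, ∑ s ∈ range T,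
        empiricalRisk f x (onlineGradDescent f' (cyclicSamples x ι) s) =
      ∑ ι : Fin T → Fin m, ∑ s ∈ range T,
        f ⟪cyclicSamples x ι s, onlineGradDescent f' (cyclicSamples x ι) s⟫ := by
  rw [sum_comm]
  conv_rhs => rw [sum_comm]
  refine sum_congr rfl fun s hs => ?_
  simp_rw [empiricalRisk, ← mul_sum]
  rw [sum_sum_onlineGradDescent_cyclicSamples (fun a w => f ⟪a, w⟫) f' x (mem_range.1 hs),
    nsmul_eq_mul, one_div, inv_mul_cancel_left₀ (by positivity)]

end SGD

/-- expected risk of averaged SGD with the logistic loss.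
The randomness of SGD is modelled by a uniformly random choice of the sequence
of indices `ι : Fin T → Fin m` (the index `ι t` is the one used in the update
producing `w_{t+1}`, for `1 ≤ t < T`; the iterates `w₁,…,w_T` depend only on
these). For any `T > 1/γ²`, the expectation of `L̂(v_T)` over this choice
(each of the `m^T` sequences having probability `m^{-T}`) is at most
`(4/(3γ²T))·(1 + (1/2)log²(γ²T))`. -/
theorem stmt_12 {d m : ℕ} (hm : 0 < m)
    (x : Fin m → EuclideanSpace ℝ (Fin d)) (hx : ∀ i, ‖x i‖ ≤ 1)
    (γ : ℝ) (hγ : γ ∈ Set.Ioc (0 : ℝ) 1)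
    (w₀ : EuclideanSpace ℝ (Fin d)) (hw₀ : ‖w₀‖ = 1)
    (hsep : ∀ i, γ ≤ ⟪x i, w₀⟫)
    (ℓ ℓ' : ℝ → ℝ)
    (hℓ : ∀ z, ℓ z = Real.log (1 + Real.exp (-z)))
    (hderiv : ∀ z, HasDerivAt ℓ (ℓ' z) z)
    (L : EuclideanSpace ℝ (Fin d) → ℝ)
    (hL : ∀ v, L v = (1 / m) * ∑ i, ℓ ⟪x i, v⟫)
    (T : ℕ) (hT : 1 / γ ^ 2 < (T : ℝ))
    (W : (Fin T → Fin m) → ℕ → EuclideanSpace ℝ (Fin d))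
    (hW1 : ∀ ι, W ι 1 = 0)
    (hWrec : ∀ ι (t : Fin T), 1 ≤ (t : ℕ) →
      W ι ((t : ℕ) + 1) = W ι (t : ℕ) - ℓ' ⟪x (ι t), W ι (t : ℕ)⟫ • x (ι t))
    (v : (Fin T → Fin m) → EuclideanSpace ℝ (Fin d))
    (hv : ∀ ι, v ι = (T : ℝ)⁻¹ • ∑ t ∈ Finset.Icc 1 T, W ι t) :
    ((m : ℝ) ^ T)⁻¹ * ∑ ι : Fin T → Fin m, L (v ι) ≤
      4 / (3 * γ ^ 2 * T) * (1 + (1 / 2) * (Real.log (γ ^ 2 * T)) ^ 2) := by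
  obtain rfl : ℓ = logisticLoss := funext hℓ
  obtain rfl : ℓ' = fun z => -sigmoid (-z) :=
    funext fun z => (hderiv z).unique (hasDerivAt_logisticLoss z)
  obtain rfl : L = empiricalRisk logisticLoss x := funext hL
  have hγT : 1 < γ ^ 2 * T := by rwa [div_lt_iff₀ (by positivity [hγ.1]), mul_comm] at hT
  have hT0 : 0 < T := Nat.pos_of_ne_zero (by rintro rfl; norm_num at hγT)
  have : NeZero T := ⟨hT0.ne'⟩
  set gd := fun ι : Fin T → Fin m => onlineGradDescent (fun z => -sigmoid (-z)) (cyclicSamples x ι)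
  set B := 4 / 3 * (T * exp (-log (γ ^ 2 * T)) + log (γ ^ 2 * T) ^ 2 / (2 * γ ^ 2)) with hB
  have hjensen : ∀ ι, empiricalRisk logisticLoss x (v ι) ≤
      (T : ℝ)⁻¹ * ∑ s ∈ range T, empiricalRisk logisticLoss x (gd ι s) := fun ι => by
    rw [hv, sum_Icc_eq_sum_range_onlineGradDescent (fun z => -sigmoid (-z)) x ι (hW1 ι) (hWrec ι)]
    exact (convexOn_empiricalRisk convexOn_logisticLoss x).map_smul_sum_range_le hT0 _
  have hregret : ∀ ι, ∑ s ∈ range T, logisticLoss ⟪cyclicSamples x ι s, gd ι s⟫ ≤ B := fun ι =>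
    sum_logisticLoss_onlineGradDescent_le (fun _ => hx _) hw₀ hγ.1 (fun _ => hsep _)
      (log_nonneg hγT.le) T
  calc ((m : ℝ) ^ T)⁻¹ * ∑ ι, empiricalRisk logisticLoss x (v ι)
      ≤ ((m : ℝ) ^ T)⁻¹ *
          ∑ ι, (T : ℝ)⁻¹ * ∑ s ∈ range T, empiricalRisk logisticLoss x (gd ι s) := by
        gcongr with ι; exact hjensen ι
    _ = ((m : ℝ) ^ T)⁻¹ * (T : ℝ)⁻¹ *
          ∑ ι, ∑ s ∈ range T, logisticLoss ⟪cyclicSamples x ι s, gd ι s⟫ := by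
        rw [← mul_sum, sum_sum_empiricalRisk_onlineGradDescent hm, mul_assoc]
    _ ≤ ((m : ℝ) ^ T)⁻¹ * (T : ℝ)⁻¹ * ∑ _ι : Fin T → Fin m, B := by
        gcongr with ι; exact hregret ι
    _ = 4 / (3 * γ ^ 2 * T) * (1 + (1 / 2) * (Real.log (γ ^ 2 * T)) ^ 2) := by
        have : (0 : ℝ) < γ := hγ.1
        rw [hB, sum_const, card_univ, Fintype.card_fun, Fintype.card_fin, Fintype.card_fin,
          nsmul_eq_mul, Nat.cast_pow, exp_neg, exp_log (by positivity)]
        field_simp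
end

section
/- Fix ε, γ ∈ (0, 1/8] and a step size 0 < η ≤ 1, and consider gradient descent on the bivariate function L̂(r,s) := (1−ε)·ℓ(r) + ε·ℓ(−r/2 + 3γs), where ℓ is the logistic loss, starting from (r_1, s_1) = (0,0) with updates (r_{t+1}, s_{t+1}) = (r_t, s_t) − η∇L̂(r_t, s_t). Then for any t, if −r_t/2 + 3γs_t > 0, it must hold that t ≥ 19/(480γ²ε). -/
/-! As long as `r_t ≤ 1` the logistic gradient pushes `r` up by at least `5η/32` per step, which
outweighs the growth of the margin `−r/2 + 3γs` through `s` (at most `9γ²εη ≤ 9η/512` per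
step); once `r_t > 1` a single step lowers `r` by at most `εη/2`. Hence at every time either the
margin is nonpositive or `r_t ≥ 57η/80`. On the other hand `s` grows by at most `3γεη` per step,
so a positive margin at time `t` forces `57η/160 ≤ r_t/2 < 3γ s_t ≤ 9γ²εη(t − 1)`. -/

open Real

theorem hasDerivAt_log_one_add_exp_neg (z : ℝ) :
    HasDerivAt (fun z => log (1 + exp (-z))) (-(1 + exp z)⁻¹) z := by
  have hinner : HasDerivAt (fun z => 1 + exp (-z)) (-exp (-z)) z := by
    simpa using ((hasDerivAt_neg z).exp).const_add 1
  convert hinner.log (by positivity) using 1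
  rw [exp_neg]
  field_simp
  ring

section LogisticDeriv

variable (z : ℝ)

theorem neg_one_le_neg_inv_one_add_exp : -1 ≤ -(1 + exp z)⁻¹ :=
  neg_le_neg (inv_le_one_of_one_le₀ (by linarith [exp_pos z]))

theorem neg_inv_one_add_exp_nonpos : -(1 + exp z)⁻¹ ≤ 0 :=
  neg_nonpos.mpr (by positivity)

variable {z}

theorem neg_inv_one_add_exp_le_neg_quarter (hz : z ≤ 1) : -(1 + exp z)⁻¹ ≤ -(1 / 4) := by
  have hexp : exp z < 3 := (exp_le_exp.mpr hz).trans_lt exp_one_lt_three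
  rw [neg_le_neg_iff, one_div]
  exact inv_anti₀ (by positivity) (by linarith)

end LogisticDeriv

theorem le_add_mul_sub_one_of_succ_le {s : ℕ → ℝ} {c : ℝ}
    (h : ∀ t, 1 ≤ t → s (t + 1) ≤ s t + c) : ∀ t, 1 ≤ t → s t ≤ s 1 + c * ((t : ℝ) - 1) := by
  intro t ht
  induction t, ht using Nat.le_induction with
  | base => simp
  | succ t ht ih =>
    push_cast
    linarith [h t ht]

section GradientDescent

variable {ε γ η : ℝ}

/-- `A` and `B` stand for `ℓ'(r)` and `ℓ'(−r/2 + 3γs)`. -/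
theorem margin_nonpos_or_le_step (hε0 : 0 < ε) (hε8 : ε ≤ 1 / 8) (hγ0 : 0 < γ)
    (hγ8 : γ ≤ 1 / 8) (hη0 : 0 < η) (hη1 : η ≤ 1) {r s A B : ℝ}
    (hA0 : A ≤ 0) (hAr : r ≤ 1 → A ≤ -(1 / 4)) (hB0 : B ≤ 0) (hB1 : -1 ≤ B)
    (h : -r / 2 + 3 * γ * s ≤ 0 ∨ 57 / 80 * η ≤ r) :
    -(r - (1 - ε) * η * A + ε * η / 2 * B) / 2 + 3 * γ * (s - 3 * γ * ε * η * B) ≤ 0 ∨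
      57 / 80 * η ≤ r - (1 - ε) * η * A + ε * η / 2 * B := by
  have hεη : 0 < ε * η := mul_pos hε0 hη0
  have hB : -(ε * η * B) ≤ ε * η := by nlinarith
  have hγB : -(γ * γ * (ε * η * B)) ≤ 1 / 64 * (ε * η) := by
    have hγγ : γ * γ ≤ 1 / 64 := by nlinarith
    nlinarith [mul_le_mul hγγ hB (by nlinarith) (by norm_num : (0 : ℝ) ≤ 1 / 64)]
  rcases le_or_gt r 1 with hr | hr
  · have hA : (1 - ε) * η * A ≤ (1 - ε) * η * -(1 / 4) :=
      mul_le_mul_of_nonneg_left (hAr hr) (by nlinarith)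
    refine h.imp (fun hm => ?_) (fun hr' => ?_) <;> nlinarith
  · right
    nlinarith [mul_nonpos_of_nonneg_of_nonpos (by nlinarith : 0 ≤ (1 - ε) * η) hA0]

variable {ℓ' : ℝ → ℝ} {r s : ℕ → ℝ}

theorem margin_nonpos_or_le (hε0 : 0 < ε) (hε8 : ε ≤ 1 / 8) (hγ0 : 0 < γ) (hγ8 : γ ≤ 1 / 8)
    (hη0 : 0 < η) (hη1 : η ≤ 1) (hℓ'0 : ∀ z, ℓ' z ≤ 0) (hℓ'1 : ∀ z, -1 ≤ ℓ' z)
    (hℓ'q : ∀ z ≤ 1, ℓ' z ≤ -(1 / 4)) (hr1 : r 1 = 0) (hs1 : s 1 = 0)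
    (hrrec : ∀ t, 1 ≤ t →
      r (t + 1) = r t - (1 - ε) * η * ℓ' (r t) + (ε * η / 2) * ℓ' (-(r t) / 2 + 3 * γ * s t))
    (hsrec : ∀ t, 1 ≤ t →
      s (t + 1) = s t - 3 * γ * ε * η * ℓ' (-(r t) / 2 + 3 * γ * s t)) :
    ∀ t, 1 ≤ t → -(r t) / 2 + 3 * γ * s t ≤ 0 ∨ 57 / 80 * η ≤ r t := by
  intro t ht
  induction t, ht using Nat.le_induction with
  | base => left; simp [hr1, hs1]
  | succ t ht ih =>
    rw [hrrec t ht, hsrec t ht]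
    exact margin_nonpos_or_le_step hε0 hε8 hγ0 hγ8 hη0 hη1 (hℓ'0 _) (hℓ'q _)
      (hℓ'0 _) (hℓ'1 _) ih

end GradientDescent

/-- Lemma 7 of the paper. Fix `ε, γ ∈ (0, 1/8]` and a step
size `0 < η ≤ 1`, and consider gradient descent on the bivariate function
`L̂(r,s) = (1−ε)ℓ(r) + εℓ(−r/2 + 3γs)` with `ℓ` the logistic loss, starting
from `(r₁, s₁) = (0,0)`; the updates are explicitly
`r_{t+1} = r_t − (1−ε)η ℓ'(r_t) + (εη/2) ℓ'(−r_t/2 + 3γ s_t)` and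
`s_{t+1} = s_t − 3γεη ℓ'(−r_t/2 + 3γ s_t)`. Then for any `t` with
`−r_t/2 + 3γ s_t > 0`, we must have `t ≥ 19/(480γ²ε)`. -/
theorem stmt_15 (ε γ : ℝ) (hε : ε ∈ Set.Ioc (0 : ℝ) (1 / 8))
    (hγ : γ ∈ Set.Ioc (0 : ℝ) (1 / 8))
    (η : ℝ) (hη0 : 0 < η) (hη1 : η ≤ 1)
    (ℓ ℓ' : ℝ → ℝ)
    (hℓ : ∀ z, ℓ z = Real.log (1 + Real.exp (-z)))
    (hderiv : ∀ z, HasDerivAt ℓ (ℓ' z) z)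
    (r s : ℕ → ℝ) (hr1 : r 1 = 0) (hs1 : s 1 = 0)
    (hrrec : ∀ t, 1 ≤ t →
      r (t + 1) = r t - (1 - ε) * η * ℓ' (r t)
        + (ε * η / 2) * ℓ' (-(r t) / 2 + 3 * γ * s t))
    (hsrec : ∀ t, 1 ≤ t →
      s (t + 1) = s t - 3 * γ * ε * η * ℓ' (-(r t) / 2 + 3 * γ * s t)) :
    ∀ t : ℕ, 1 ≤ t → 0 < -(r t) / 2 + 3 * γ * s t →
      19 / (480 * γ ^ 2 * ε) ≤ (t : ℝ) := by
  obtain ⟨hε0, hε8⟩ := hε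
  obtain ⟨hγ0, hγ8⟩ := hγ
  have hℓ' : ∀ z, ℓ' z = -(1 + exp z)⁻¹ := fun z =>
    (hderiv z).unique (by simpa only [funext hℓ] using hasDerivAt_log_one_add_exp_neg z)
  have hℓ'1 : ∀ z, -1 ≤ ℓ' z := fun z => hℓ' z ▸ neg_one_le_neg_inv_one_add_exp z
  have hinv := margin_nonpos_or_le hε0 hε8 hγ0 hγ8 hη0 hη1
    (fun z => hℓ' z ▸ neg_inv_one_add_exp_nonpos z) hℓ'1
    (fun z hz => hℓ' z ▸ neg_inv_one_add_exp_le_neg_quarter hz) hr1 hs1 hrrec hsrec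
  have hs := le_add_mul_sub_one_of_succ_le (s := s) (c := 3 * γ * ε * η) fun t ht => by
    rw [hsrec t ht]
    nlinarith [mul_le_mul_of_nonneg_left (hℓ'1 (-(r t) / 2 + 3 * γ * s t))
      (by positivity : 0 ≤ 3 * γ * ε * η)]
  intro t ht hm
  have hr : 57 / 80 * η ≤ r t := (hinv t ht).resolve_left (not_le.mpr hm)
  have hst : s t ≤ 3 * γ * ε * η * ((t : ℝ) - 1) := by simpa [hs1] using hs t ht
  have ht1 : (1 : ℝ) ≤ t := by exact_mod_cast ht
  have key : 57 / 160 * η < 9 * γ ^ 2 * ε * η * ((t : ℝ) - 1) := by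
    nlinarith [mul_pos hγ0 hε0]
  rw [div_le_iff₀ (by positivity)]
  nlinarith [mul_pos (mul_pos hγ0 hγ0) hε0]
end
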